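/- arXiv:0709.0448 — 6 statements merged into one kernel-verified Lean document; each statement's English description precedes it below -/
import Mathlib

section
/- If the Markov chain with kernel S is φ-reducible, then there exists a closed set C with φ(Cᶜ) > 0. Concretely, given A with φ(A) > 0 and y ∈ Aᶜ with S^n(y, A) = 0 for all n, the set C = Aᶜ ∩ Bᶜ is closed and φ(Cᶜ) > 0, where B = ⋃_{m≥1} {w : S^m(w, A) > 0}. -/
open MeasureTheory ProbabilityTheory Filter

/-!
Let `N` be the set of states from which `A` is never reached. If `z ∈ N`, then `0 = Sⁿ⁺¹(z, A) = ∫ Sⁿ(w, A) dS(z, w)`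
forces `Sⁿ(w, A) = 0` for `S(z, ·)`-almost every `w`, for all `n` at once by countability; so `S(z, ·)` is carried by
`N`, and also by `Aᶜ` since `S(z, A) = 0`. Hence `C = Aᶜ ∩ N` is closed, it contains `y`, and its complement contains
`A`, which has positive `φ`-measure.
-/

namespace ProbabilityTheory.Kernel

variable {α β γ : Type*} [MeasurableSpace α] [MeasurableSpace β] [MeasurableSpace γ]

theorem ae_apply_eq_zero_of_comp_apply_eq_zero {η : Kernel β γ} {κ : Kernel α β} {a : α}
    {s : Set γ} (hs : MeasurableSet s) (h : (η ∘ₖ κ) a s = 0) : ∀ᵐ b ∂κ a, η b s = 0 := by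
  rw [comp_apply' _ _ _ hs] at h
  exact (lintegral_eq_zero_iff (η.measurable_coe hs)).1 h

theorem ae_forall_iterate_apply_eq_zero {Y : Type*} [MeasurableSpace Y] {S : Kernel Y Y}
    {Sn : ℕ → Kernel Y Y} (hrec : ∀ n, 1 ≤ n → Sn (n + 1) = Sn n ∘ₖ S) {s : Set Y}
    (hs : MeasurableSet s) {z : Y} (hz : ∀ n, 1 ≤ n → Sn n z s = 0) :
    ∀ᵐ w ∂S z, ∀ n, 1 ≤ n → Sn n w s = 0 := by
  refine ae_all_iff.2 fun n => ?_
  by_cases hn : 1 ≤ n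
  · have hcomp : (Sn n ∘ₖ S) z s = 0 := hrec n hn ▸ hz (n + 1) (by omega)
    exact (ae_apply_eq_zero_of_comp_apply_eq_zero hs hcomp).mono fun _ hw _ => hw
  · exact Eventually.of_forall fun _ hn' => absurd hn' hn

end ProbabilityTheory.Kernel

theorem stmt_4_general {Y : Type*} [MeasurableSpace Y]
    (S : Kernel Y Y)
    (Sn : ℕ → Kernel Y Y)
    (h1 : Sn 1 = S)
    (hrec : ∀ n, 1 ≤ n → Sn (n + 1) = (Sn n) ∘ₖ S)
    (φ : Measure Y)
    (A : Set Y) (hA : MeasurableSet A) (hφA : 0 < φ A)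
    (y : Y) (hy : y ∈ Aᶜ)
    (h0 : ∀ n, 1 ≤ n → Sn n y A = 0)
    (B C : Set Y)
    (hB : B = ⋃ m : ℕ, ⋃ _ : 1 ≤ m, {w : Y | 0 < Sn m w A})
    (hCdef : C = Aᶜ ∩ Bᶜ) :
    C.Nonempty ∧ (∀ z ∈ C, S z Cᶜ = 0) ∧ 0 < φ Cᶜ := by
  have hC : C = Aᶜ ∩ {w | ∀ n, 1 ≤ n → Sn n w A = 0} := by
    ext w
    simp [hCdef, hB]
  refine ⟨⟨y, hC ▸ ⟨hy, h0⟩⟩, fun z hz => ?_, hφA.trans_le (measure_mono ?_)⟩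
  · rw [hC] at hz ⊢
    have hSA : ∀ᵐ w ∂S z, w ∉ A := measure_eq_zero_iff_ae_notMem.1 (h1 ▸ hz.2 1 le_rfl)
    exact mem_ae_iff.1 (hSA.and (Kernel.ae_forall_iterate_apply_eq_zero hrec hA hz.2))
  · rw [hC, Set.compl_inter, compl_compl]
    exact Set.subset_union_left

/-- Theorem 3 (necessity, constructive form): given a reducibility witness `A`, `y ∈ Aᶜ`,
the set `C = Aᶜ ∩ Bᶜ` with `B = ⋃_{m ≥ 1} {w : Sᵐ(w, A) > 0}` is closed and `φ(Cᶜ) > 0`. -/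
theorem stmt_4 {Y : Type*} [MeasurableSpace Y]
    (S : Kernel Y Y) [IsMarkovKernel S]
    (Sn : ℕ → Kernel Y Y)
    (h1 : Sn 1 = S)
    (hrec : ∀ n, 1 ≤ n → Sn (n + 1) = (Sn n) ∘ₖ S)
    (φ : Measure Y) [SigmaFinite φ] (hφ : φ ≠ 0)
    (A : Set Y) (hA : MeasurableSet A) (hφA : 0 < φ A)
    (y : Y) (hy : y ∈ Aᶜ)
    (h0 : ∀ n, 1 ≤ n → Sn n y A = 0)
    (B C : Set Y)
    (hB : B = ⋃ m : ℕ, ⋃ _ : 1 ≤ m, {w : Y | 0 < Sn m w A})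
    (hCdef : C = Aᶜ ∩ Bᶜ) :
    C.Nonempty ∧ (∀ z ∈ C, S z Cᶜ = 0) ∧ 0 < φ Cᶜ :=
  stmt_4_general S Sn h1 hrec φ A hA hφA y hy h0 B C hB hCdef
end

section
/- Suppose there exist a non-empty measurable set C ⊆ Θ with ν(Cᶜ) > 0 and a measurable set A ⊆ X such that P(Aᶜ|θ) = 0 for every θ ∈ C and P(A|θ) = 0 for ν-almost every θ ∈ Cᶜ. Then there exists a version of the formal posterior Q̃ such that the kernel R̃(θ, dη) = ∫ Q̃(dη|x) P(dx|θ) satisfies R̃(θ, Cᶜ) = 0 for all θ ∈ C; consequently C is a closed set for R̃ and R̃ is ν-reducible. -/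
open MeasureTheory ProbabilityTheory

/-- `n`-step iterates of a kernel: `iterK S 0 = id`, `iterK S (n+1) = iterK S n ∘ₖ S`,
so that `iterK S n` is the `n`-step transition kernel `Sⁿ` for `n ≥ 1`. -/
noncomputable def iterK {Y : Type*} [MeasurableSpace Y] (S : Kernel Y Y) : ℕ → Kernel Y Y
  | 0 => Kernel.id
  | n + 1 => (iterK S n) ∘ₖ S

/-
If the sampling kernel concentrates on `A` over `C`, while over `Cᶜ` it almost never charges `A`,
then the posterior of `M`-almost every `x ∈ A` sits on `C`. Moving the remaining `M`-null set of
`x ∈ A` onto a point mass inside `C` gives a version `Q'` of the posterior with `Q' x Cᶜ = 0` on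
all of `A`, so the Eaton kernel `Q' ∘ₖ P` never leaves `C` once in it; since `ν Cᶜ > 0`, the
chain started in `C` never visits the `ν`-positive set `Cᶜ`.
-/

section

variable {X Θ : Type*} [MeasurableSpace X] [MeasurableSpace Θ]

lemma Kernel.comp_apply_compl_eq_zero {Q : Kernel X Θ} {P : Kernel Θ X} {C : Set Θ} {A : Set X}
    (hC : MeasurableSet C) (hPA : ∀ θ ∈ C, P θ Aᶜ = 0) (hQC : ∀ x ∈ A, Q x Cᶜ = 0) :
    ∀ θ ∈ C, (Q ∘ₖ P) θ Cᶜ = 0 := by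
  intro θ hθ
  have hQC_ae : ∀ᵐ x ∂P θ, Q x Cᶜ = 0 := by
    filter_upwards [mem_ae_iff.mpr (hPA θ hθ)] with x hx using hQC x hx
  rw [Kernel.comp_apply' _ _ _ hC.compl, lintegral_congr_ae hQC_ae, lintegral_zero]

lemma iterK_apply_compl_eq_zero {S : Kernel Θ Θ} {C : Set Θ} (hC : MeasurableSet C)
    (hS : ∀ θ ∈ C, S θ Cᶜ = 0) (n : ℕ) : ∀ θ ∈ C, iterK S n θ Cᶜ = 0 := by
  induction n with
  | zero =>
    intro θ hθ
    simp [iterK, Kernel.id_apply, Measure.dirac_apply' _ hC.compl, hθ]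
  | succ n ih => exact Kernel.comp_apply_compl_eq_zero hC hS ih

lemma ae_apply_compl_eq_zero_of_setLIntegral_eq {P : Kernel Θ X} {Q : Kernel X Θ}
    {ν : Measure Θ} {M : Measure X} {C : Set Θ} {A : Set X}
    (hC : MeasurableSet C) (hA : MeasurableSet A)
    (hQ : ∫⁻ x in A, Q x Cᶜ ∂M = ∫⁻ θ in Cᶜ, P θ A ∂ν)
    (hPA : ∀ᵐ θ ∂ν, θ ∈ Cᶜ → P θ A = 0) :
    ∀ᵐ x ∂M, x ∈ A → Q x Cᶜ = 0 := by
  rw [← setLIntegral_eq_zero_iff hA (Q.measurable_coe hC.compl), hQ]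
  exact (setLIntegral_eq_zero_iff hC.compl (P.measurable_coe hA)).mpr hPA

lemma Kernel.setLIntegral_piecewise_of_ae_notMem {M : Measure X} {N : Set X}
    [DecidablePred (· ∈ N)] (hN : MeasurableSet N) (hMN : ∀ᵐ x ∂M, x ∉ N) (K Q : Kernel X Θ) (s : Set X) (B : Set Θ) :
    ∫⁻ x in s, Kernel.piecewise hN K Q x B ∂M = ∫⁻ x in s, Q x B ∂M := by
  refine lintegral_congr_ae (ae_restrict_of_ae ?_)
  filter_upwards [hMN] with x hx
  rw [Kernel.piecewise_apply, if_neg hx]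

lemma Kernel.piecewise_dirac_apply_compl_eq_zero {Q : Kernel X Θ} {C : Set Θ} {θ₀ : Θ}
    (hC : MeasurableSet C) (hθ₀ : θ₀ ∈ C) {A N : Set X} [DecidablePred (· ∈ N)]
    (hN : MeasurableSet N)
    (hQC : ∀ x ∈ A, x ∉ N → Q x Cᶜ = 0) :
    ∀ x ∈ A, Kernel.piecewise hN (Kernel.const X (Measure.dirac θ₀)) Q x Cᶜ = 0 := by
  intro x hx
  rw [Kernel.piecewise_apply]
  split_ifs with hxN
  · simp [Measure.dirac_apply' _ hC.compl, hθ₀]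
  · exact hQC x hx hxN

end

theorem stmt_8_general {X Θ : Type*} [MeasurableSpace X] [MeasurableSpace Θ]
    (P : Kernel Θ X)
    (ν : Measure Θ)
    (M : Measure X)
    (Q : Kernel X Θ) [IsMarkovKernel Q]
    (hQ : ∀ (A : Set X) (B : Set Θ), MeasurableSet A → MeasurableSet B →
      ∫⁻ x in A, Q x B ∂M = ∫⁻ θ in B, P θ A ∂ν)
    (C : Set Θ) (hCmeas : MeasurableSet C) (hCne : C.Nonempty) (hνC : 0 < ν Cᶜ)
    (A : Set X) (hAmeas : MeasurableSet A)
    (hAC : ∀ θ ∈ C, P θ Aᶜ = 0)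
    (hACc : ∀ᵐ θ ∂ν, θ ∈ Cᶜ → P θ A = 0) :
    ∃ (Q' : Kernel X Θ), IsMarkovKernel Q' ∧
      (∀ (A' : Set X) (B : Set Θ), MeasurableSet A' → MeasurableSet B →
        ∫⁻ x in A', Q' x B ∂M = ∫⁻ θ in B, P θ A' ∂ν) ∧
      (∀ θ ∈ C, (Q' ∘ₖ P) θ Cᶜ = 0) ∧
      (∃ (θ : Θ) (B : Set Θ), MeasurableSet B ∧ 0 < ν B ∧
        ∀ n, 1 ≤ n → iterK (Q' ∘ₖ P) n θ B = 0) := by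
  classical
  obtain ⟨θ₀, hθ₀⟩ := hCne
  set N : Set X := A ∩ {x | Q x Cᶜ ≠ 0}
  have hN : MeasurableSet N :=
    hAmeas.inter ((Q.measurable_coe hCmeas.compl) (measurableSet_singleton 0)).compl
  have hMN : ∀ᵐ x ∂M, x ∉ N :=
    (ae_apply_compl_eq_zero_of_setLIntegral_eq hCmeas hAmeas (hQ A Cᶜ hAmeas hCmeas.compl)
      hACc).mono fun x hx ⟨hxA, hne⟩ => hne (hx hxA)
  set Q' := Kernel.piecewise hN (Kernel.const X (Measure.dirac θ₀)) Q
  have hQ'C : ∀ θ ∈ C, (Q' ∘ₖ P) θ Cᶜ = 0 :=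
    Kernel.comp_apply_compl_eq_zero hCmeas hAC <|
      Kernel.piecewise_dirac_apply_compl_eq_zero hCmeas hθ₀ hN fun x hxA hxN => by
        by_contra hne
        exact hxN ⟨hxA, hne⟩
  refine ⟨Q', inferInstance, fun A' B hA' hB => ?_, hQ'C,
    θ₀, Cᶜ, hCmeas.compl, hνC, fun n _ => iterK_apply_compl_eq_zero hCmeas hQ'C n θ₀ hθ₀⟩
  rw [Kernel.setLIntegral_piecewise_of_ae_notMem hN hMN, hQ A' B hA' hB]

/-- Theorem 4 (sufficiency): if sets `A ⊆ X` and `C ⊆ Θ` as described exist, then there is a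
version `Q̃` of the formal posterior whose Eaton kernel `R̃ = Q̃ ∘ₖ P` satisfies
`R̃(θ, Cᶜ) = 0` for all `θ ∈ C`; consequently `C` is closed for `R̃` and `R̃` is
`ν`-reducible. -/
theorem stmt_8 {X Θ : Type*} [MeasurableSpace X] [MeasurableSpace Θ]
    (P : Kernel Θ X) [IsMarkovKernel P]
    (ν : Measure Θ) [SigmaFinite ν]
    (M : Measure X) (hM : M = ν.bind (fun θ => P θ)) [SigmaFinite M]
    (Q : Kernel X Θ) [IsMarkovKernel Q]
    (hQ : ∀ (A : Set X) (B : Set Θ), MeasurableSet A → MeasurableSet B →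
      ∫⁻ x in A, Q x B ∂M = ∫⁻ θ in B, P θ A ∂ν)
    (C : Set Θ) (hCmeas : MeasurableSet C) (hCne : C.Nonempty) (hνC : 0 < ν Cᶜ)
    (A : Set X) (hAmeas : MeasurableSet A)
    (hAC : ∀ θ ∈ C, P θ Aᶜ = 0)
    (hACc : ∀ᵐ θ ∂ν, θ ∈ Cᶜ → P θ A = 0) :
    ∃ (Q' : Kernel X Θ), IsMarkovKernel Q' ∧
      (∀ (A' : Set X) (B : Set Θ), MeasurableSet A' → MeasurableSet B →
        ∫⁻ x in A', Q' x B ∂M = ∫⁻ θ in B, P θ A' ∂ν) ∧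
      (∀ θ ∈ C, (Q' ∘ₖ P) θ Cᶜ = 0) ∧
      (∃ (θ : Θ) (B : Set Θ), MeasurableSet B ∧ 0 < ν B ∧
        ∀ n, 1 ≤ n → iterK (Q' ∘ₖ P) n θ B = 0) :=
  stmt_8_general P ν M Q hQ C hCmeas hCne hνC A hAmeas hAC hACc
end

section
/- Suppose the Eaton kernel R(θ, dη) = ∫ Q(dη|x) P(dx|θ) is ν-reducible, so there is a closed set C with ν(Cᶜ) > 0. Then, setting A = {x : Q(Cᶜ|x) = 0}, we have P(Aᶜ|θ) = 0 for all θ ∈ C and P(A|θ) = 0 for ν-almost all θ ∈ Cᶜ. -/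
open MeasureTheory ProbabilityTheory

namespace ProbabilityTheory.Kernel

variable {α β γ : Type*} [MeasurableSpace α] [MeasurableSpace β] [MeasurableSpace γ]

lemma measure_setOf_ne_zero_of_comp_apply_eq_zero {κ : Kernel α β} {η : Kernel β γ} {a : α}
    {s : Set γ} (hs : MeasurableSet s) (h : (η ∘ₖ κ) a s = 0) :
    κ a {b | η b s ≠ 0} = 0 := by
  rw [comp_apply' _ _ _ hs, lintegral_eq_zero_iff (η.measurable_coe hs)] at h
  exact ae_iff.mp h

/-- `hQ` says that `Q` is a formal posterior of `P` under the prior `ν`, with marginal `M`. -/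
lemma ae_mem_imp_measure_setOf_eq_zero_of_posterior {P : Kernel α β} {Q : Kernel β α}
    {ν : Measure α} {M : Measure β}
    (hQ : ∀ (A : Set β) (B : Set α), MeasurableSet A → MeasurableSet B →
      ∫⁻ x in A, Q x B ∂M = ∫⁻ θ in B, P θ A ∂ν)
    {B : Set α} (hB : MeasurableSet B) :
    ∀ᵐ θ ∂ν, θ ∈ B → P θ {x | Q x B = 0} = 0 := by
  have hA : MeasurableSet {x | Q x B = 0} :=
    Q.measurable_coe hB (measurableSet_singleton 0)
  have hQB : ∫⁻ x in {x | Q x B = 0}, Q x B ∂M = 0 := by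
    rw [setLIntegral_congr_fun hA fun x hx => hx, lintegral_zero]
  rw [hQ _ _ hA hB, lintegral_eq_zero_iff (P.measurable_coe hA)] at hQB
  exact (ae_restrict_iff' hB).mp hQB

end ProbabilityTheory.Kernel

theorem stmt_9_general {X Θ : Type*} [MeasurableSpace X] [MeasurableSpace Θ]
    (P : Kernel Θ X)
    (ν : Measure Θ)
    (M : Measure X)
    (Q : Kernel X Θ)
    (hQ : ∀ (A : Set X) (B : Set Θ), MeasurableSet A → MeasurableSet B →
      ∫⁻ x in A, Q x B ∂M = ∫⁻ θ in B, P θ A ∂ν)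
    (C : Set Θ) (hCmeas : MeasurableSet C)
    (hclosed : ∀ θ ∈ C, (Q ∘ₖ P) θ Cᶜ = 0)
    (A : Set X) (hA : A = {x : X | Q x Cᶜ = 0}) :
    (∀ θ ∈ C, P θ Aᶜ = 0) ∧ (∀ᵐ θ ∂ν, θ ∈ Cᶜ → P θ A = 0) := by
  subst hA
  exact ⟨fun θ hθ =>
      Kernel.measure_setOf_ne_zero_of_comp_apply_eq_zero hCmeas.compl (hclosed θ hθ),
    Kernel.ae_mem_imp_measure_setOf_eq_zero_of_posterior hQ hCmeas.compl⟩

/-- Theorem 4 (necessity): if Eaton's kernel `R = Q ∘ₖ P` has a closed set `C` with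
`ν(Cᶜ) > 0`, then, with `A = {x : Q(Cᶜ|x) = 0}`, we have `P(Aᶜ|θ) = 0` for all `θ ∈ C`
and `P(A|θ) = 0` for `ν`-a.e. `θ ∈ Cᶜ`. -/
theorem stmt_9 {X Θ : Type*} [MeasurableSpace X] [MeasurableSpace Θ]
    (P : Kernel Θ X) [IsMarkovKernel P]
    (ν : Measure Θ) [SigmaFinite ν]
    (M : Measure X) (hM : M = ν.bind (fun θ => P θ)) [SigmaFinite M]
    (Q : Kernel X Θ) [IsMarkovKernel Q]
    (hQ : ∀ (A : Set X) (B : Set Θ), MeasurableSet A → MeasurableSet B →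
      ∫⁻ x in A, Q x B ∂M = ∫⁻ θ in B, P θ A ∂ν)
    (C : Set Θ) (hCmeas : MeasurableSet C) (hCne : C.Nonempty) (hνC : 0 < ν Cᶜ)
    (hclosed : ∀ θ ∈ C, (Q ∘ₖ P) θ Cᶜ = 0)
    (A : Set X) (hA : A = {x : X | Q x Cᶜ = 0}) :
    (∀ θ ∈ C, P θ Aᶜ = 0) ∧ (∀ᵐ θ ∂ν, θ ∈ Cᶜ → P θ A = 0) :=
  stmt_9_general P ν M Q hQ C hCmeas hclosed A hA
end

section
/- If there do not exist a non-empty measurable set C ⊆ Θ with ν(Cᶜ) > 0 and a measurable set A ⊆ X with P(Aᶜ|θ) = 0 for all θ ∈ C and P(A|θ) = 0 for ν-almost all θ ∈ Cᶜ, then every version of Eaton's kernel R is ν-irreducible. -/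
/-!
Let `C` be the set of states from which `B` is never reached. It is absorbing for `R = Q ∘ₖ P`,
so `P θ'` is carried by `A = {x | Q x Cᶜ = 0}` for every `θ' ∈ C`, and the duality between `P`
and `Q` gives `P θ' A = 0` for `ν`-a.e. `θ' ∈ Cᶜ`. Since `ν` is `R`-invariant and `R θ' B = 0`
on `C`, also `ν Cᶜ > 0`. If some `θ ∈ C` existed, `C` and `A` would be the excluded pair.
-/

open MeasureTheory ProbabilityTheory

namespace ProbabilityTheory.Kernel

variable {X Θ : Type*} [MeasurableSpace X] [MeasurableSpace Θ]

def neverReaching (Rn : ℕ → Kernel Θ Θ) (B : Set Θ) : Set Θ :=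
  {θ | ∀ n, 1 ≤ n → Rn n θ B = 0}

lemma measurableSet_neverReaching (Rn : ℕ → Kernel Θ Θ) {B : Set Θ} (hB : MeasurableSet B) :
    MeasurableSet (neverReaching Rn B) := by
  simp only [neverReaching, Set.ofPred_forall]
  exact .iInter fun n => .iInter fun _ => (Rn n).measurable_coe hB (measurableSet_singleton 0)

lemma apply_compl_neverReaching_eq_zero {R : Kernel Θ Θ} {Rn : ℕ → Kernel Θ Θ}
    (hRn : ∀ n, 1 ≤ n → Rn (n + 1) = Rn n ∘ₖ R) {B : Set Θ} (hB : MeasurableSet B) {θ : Θ}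
    (hθ : θ ∈ neverReaching Rn B) : R θ (neverReaching Rn B)ᶜ = 0 := by
  have hiter : ∀ n, 1 ≤ n → ∀ᵐ θ' ∂(R θ), Rn n θ' B = 0 := fun n hn => by
    have h := hθ (n + 1) (by omega)
    rwa [hRn n hn, comp_apply' _ _ _ hB, lintegral_eq_zero_iff ((Rn n).measurable_coe hB)] at h
  have hae : ∀ᵐ θ' ∂(R θ), θ' ∈ neverReaching Rn B := by
    simpa only [neverReaching, Set.mem_ofPred_eq, ae_all_iff, Filter.eventually_imp_distrib_left]
      using hiter
  exact ae_iff.1 hae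

lemma apply_compl_setOf_eq_zero_of_comp_apply_eq_zero {P : Kernel Θ X} {Q : Kernel X Θ} {θ : Θ}
    {s : Set Θ} (hs : MeasurableSet s) (h : (Q ∘ₖ P) θ s = 0) :
    P θ {x | Q x s = 0}ᶜ = 0 := by
  rw [comp_apply' _ _ _ hs, lintegral_eq_zero_iff (Q.measurable_coe hs)] at h
  exact ae_iff.1 h

def IsFormalPosterior (P : Kernel Θ X) (ν : Measure Θ) (Q : Kernel X Θ) : Prop :=
  ∀ (A : Set X) (B : Set Θ), MeasurableSet A → MeasurableSet B →
    ∫⁻ x in A, Q x B ∂(ν.bind P) = ∫⁻ θ in B, P θ A ∂ν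

namespace IsFormalPosterior

variable {P : Kernel Θ X} {Q : Kernel X Θ} {ν : Measure Θ}

lemma bind_comp_eq_self [IsMarkovKernel P] (hQ : IsFormalPosterior P ν Q) :
    ν.bind (Q ∘ₖ P) = ν := by
  ext B hB
  calc (ν.bind (Q ∘ₖ P)) B = ∫⁻ θ, ∫⁻ x, Q x B ∂(P θ) ∂ν := by
        rw [Measure.bind_apply hB (Q ∘ₖ P).aemeasurable]
        exact lintegral_congr fun θ => comp_apply' Q P θ hB
    _ = ∫⁻ x, Q x B ∂(ν.bind P) :=
        (Measure.lintegral_bind P.aemeasurable (Q.measurable_coe hB).aemeasurable).symm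
    _ = ν B := by simpa using hQ .univ B .univ hB

lemma ae_apply_setOf_eq_zero (hQ : IsFormalPosterior P ν Q) {D : Set Θ} (hD : MeasurableSet D) :
    ∀ᵐ θ ∂ν, θ ∈ D → P θ {x | Q x D = 0} = 0 := by
  have hA : MeasurableSet {x | Q x D = 0} := Q.measurable_coe hD (measurableSet_singleton 0)
  have h := hQ _ D hA hD
  rwa [setLIntegral_congr_fun hA fun x hx => hx, lintegral_zero, eq_comm,
    setLIntegral_eq_zero_iff hD (P.measurable_coe hA)] at h

end IsFormalPosterior

end ProbabilityTheory.Kernel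

open ProbabilityTheory.Kernel in
theorem stmt_11_general {X Θ : Type*} [MeasurableSpace X] [MeasurableSpace Θ]
    (P : Kernel Θ X) [IsMarkovKernel P]
    (ν : Measure Θ)
    (M : Measure X) (hM : M = ν.bind (fun θ => P θ))
    (hno : ¬ ∃ (C : Set Θ) (A : Set X), MeasurableSet C ∧ C.Nonempty ∧ 0 < ν Cᶜ ∧
      MeasurableSet A ∧ (∀ θ ∈ C, P θ Aᶜ = 0) ∧ (∀ᵐ θ ∂ν, θ ∈ Cᶜ → P θ A = 0)) :
    ∀ (Q : Kernel X Θ), IsMarkovKernel Q →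
      (∀ (A : Set X) (B : Set Θ), MeasurableSet A → MeasurableSet B →
        ∫⁻ x in A, Q x B ∂M = ∫⁻ θ in B, P θ A ∂ν) →
      ∀ (Rn : ℕ → Kernel Θ Θ), Rn 1 = Q ∘ₖ P →
        (∀ n, 1 ≤ n → Rn (n + 1) = (Rn n) ∘ₖ (Q ∘ₖ P)) →
        ∀ (θ : Θ) (B : Set Θ), MeasurableSet B → 0 < ν B →
          ∃ n, 1 ≤ n ∧ 0 < Rn n θ B := by
  subst hM
  intro Q _ hQ Rn hR1 hRn θ B hB hνB
  replace hQ : IsFormalPosterior P ν Q := hQ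
  by_contra! hθ
  set C := neverReaching Rn B
  have hC : MeasurableSet C := measurableSet_neverReaching Rn hB
  have hνC : 0 < ν Cᶜ := by
    refine pos_iff_ne_zero.2 fun hνC => hνB.ne' ?_
    have hR : ∀ᵐ θ' ∂ν, (Q ∘ₖ P) θ' B = 0 := by
      filter_upwards [measure_eq_zero_iff_ae_notMem.1 hνC] with θ' hθ'
      simpa [hR1] using (not_not.1 hθ') 1 le_rfl
    rw [← hQ.bind_comp_eq_self, Measure.bind_apply hB (Q ∘ₖ P).aemeasurable,
      lintegral_congr_ae hR, lintegral_zero]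
  refine hno ⟨C, {x | Q x Cᶜ = 0}, hC, ⟨θ, fun n hn => nonpos_iff_eq_zero.1 (hθ n hn)⟩, hνC,
    Q.measurable_coe hC.compl (measurableSet_singleton 0), fun θ' hθ' => ?_,
    hQ.ae_apply_setOf_eq_zero hC.compl⟩
  exact apply_compl_setOf_eq_zero_of_comp_apply_eq_zero hC.compl
    (apply_compl_neverReaching_eq_zero hRn hB hθ')

/-- Theorem 2: if the sets `A ⊆ X` and `C ⊆ Θ` of Theorem 4 do not exist, then every version
of Eaton's kernel `R = Q ∘ₖ P` is `ν`-irreducible. -/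
theorem stmt_11 {X Θ : Type*} [MeasurableSpace X] [MeasurableSpace Θ]
    (P : Kernel Θ X) [IsMarkovKernel P]
    (ν : Measure Θ) [SigmaFinite ν]
    (M : Measure X) (hM : M = ν.bind (fun θ => P θ)) [SigmaFinite M]
    (hno : ¬ ∃ (C : Set Θ) (A : Set X), MeasurableSet C ∧ C.Nonempty ∧ 0 < ν Cᶜ ∧
      MeasurableSet A ∧ (∀ θ ∈ C, P θ Aᶜ = 0) ∧ (∀ᵐ θ ∂ν, θ ∈ Cᶜ → P θ A = 0)) :
    ∀ (Q : Kernel X Θ), IsMarkovKernel Q →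
      (∀ (A : Set X) (B : Set Θ), MeasurableSet A → MeasurableSet B →
        ∫⁻ x in A, Q x B ∂M = ∫⁻ θ in B, P θ A ∂ν) →
      ∀ (Rn : ℕ → Kernel Θ Θ), Rn 1 = Q ∘ₖ P →
        (∀ n, 1 ≤ n → Rn (n + 1) = (Rn n) ∘ₖ (Q ∘ₖ P)) →
        ∀ (θ : Θ) (B : Set Θ), MeasurableSet B → 0 < ν B →
          ∃ n, 1 ≤ n ∧ 0 < Rn n θ B :=
  stmt_11_general P ν M hM hno
end

section
/- Let C ⊆ ℝ be a non-empty measurable set whose complement has positive Lebesgue measure. Then there exist θ' ∈ C and a measurable set D ⊆ Cᶜ with positive Lebesgue measure such that |θ − θ'| < 1/4 for every θ ∈ D. -/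
/-!
Let `E` be the support of Lebesgue measure restricted to `Cᶜ`; it is closed and nonempty. If every
point of `C` had a null `1/4`-neighbourhood in `Cᶜ`, then no point of `C` could lie within `1/4` of
`E`, so the `1/4`-ball around each point of `E` would be an open subset of `Cᶜ` and hence of `E`.
Then `E` would be clopen, i.e. everything, contradicting `C ≠ ∅`.
-/

open MeasureTheory Metric Set

theorem exists_mem_measure_compl_inter_ball_pos {X : Type*} [PseudoMetricSpace X]
    [PreconnectedSpace X] [HereditarilyLindelofSpace X] [MeasurableSpace X]
    [OpensMeasurableSpace X] {μ : Measure X} [μ.IsOpenPosMeasure] {C : Set X}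
    (hC : C.Nonempty) (hCc : μ Cᶜ ≠ 0) {r : ℝ} (hr : 0 < r) :
    ∃ x ∈ C, 0 < μ (Cᶜ ∩ ball x r) := by
  by_contra! hnull
  set E := (μ.restrict Cᶜ).support
  have hE : E.Nonempty := Measure.nonempty_support (by rwa [Ne, Measure.restrict_eq_zero])
  have hball : ∀ e ∈ E, ball e r ⊆ Cᶜ := by
    intro e he y hy hyC
    have hpos := (Measure.mem_support_iff_forall e).1 he (ball y r)
      (isOpen_ball.mem_nhds (mem_ball_comm.1 hy))
    rw [Measure.restrict_apply measurableSet_ball, inter_comm] at hpos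
    exact hpos.not_ge (hnull y hyC)
  have hE_open : IsOpen E := isOpen_iff.2 fun e he ↦ ⟨r, hr, fun y hy ↦
    Measure.interior_inter_support
      ⟨interior_maximal (hball e he) isOpen_ball hy, by simp [Measure.support_eq_univ]⟩⟩
  have hE_univ : E = univ := IsClopen.eq_univ ⟨Measure.isClosed_support, hE_open⟩ hE
  obtain ⟨x, hx⟩ := hC
  exact hball x (hE_univ ▸ mem_univ x) (mem_ball_self hr) hx

/-- Example 1, key step: for any non-empty measurable `C ⊆ ℝ` with `Leb(Cᶜ) > 0`, there exist
`θ' ∈ C` and a measurable `D ⊆ Cᶜ` of positive Lebesgue measure with `|θ − θ'| < 1/4` for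
all `θ ∈ D`. -/
theorem stmt_13 (C : Set ℝ) (hC : MeasurableSet C) (hne : C.Nonempty)
    (hpos : 0 < volume Cᶜ) :
    ∃ θ' ∈ C, ∃ D : Set ℝ, MeasurableSet D ∧ D ⊆ Cᶜ ∧ 0 < volume D ∧
      ∀ θ ∈ D, |θ - θ'| < 1 / 4 := by
  obtain ⟨θ', hθ'C, hD⟩ :=
    exists_mem_measure_compl_inter_ball_pos hne hpos.ne' (by norm_num : (0 : ℝ) < 1 / 4)
  exact ⟨θ', hθ'C, Cᶜ ∩ ball θ' (1 / 4), hC.compl.inter measurableSet_ball, inter_subset_left,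
    hD, fun θ hθ ↦ Real.dist_eq θ θ' ▸ hθ.2⟩
end

section
/- Consider the uniform location model on ℝ: P(A|θ) = Leb(A ∩ (θ, θ+1)), with prior ν = Lebesgue measure on ℝ. Then there do not exist a non-empty measurable set C ⊆ ℝ with ν(Cᶜ) > 0 and a measurable set A ⊆ ℝ such that P(Aᶜ|θ) = 0 for all θ ∈ C and P(A|θ) = 0 for ν-almost all θ ∈ Cᶜ. -/
/-!
The function `g θ = Leb(A ∩ (θ, θ + 1))` is continuous in `θ`, being a difference of two
primitives of `1_A`. It equals `1` on the non-empty set `C` and vanishes at almost every point of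
the non-null set `Cᶜ`, so it takes both values `0` and `1`. By the intermediate value theorem the
open set `g⁻¹' (0, 1)` is non-empty, hence of positive measure; yet almost every `θ` lies either
in `C` (where `g θ = 1`) or in the part of `Cᶜ` where `g θ = 0`.
-/

open MeasureTheory Set Filter

theorem measureReal_inter_Ioo_eq_intervalIntegral {A : Set ℝ} (hA : MeasurableSet A) {a b : ℝ}
    (hab : a ≤ b) : volume.real (A ∩ Ioo a b) = ∫ x in a..b, A.indicator 1 x := by
  rw [intervalIntegral.integral_of_le hab, integral_indicator_one hA,
    measureReal_restrict_apply hA, measureReal_congr (EventuallyEq.rfl.inter Ioo_ae_eq_Ioc)]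

theorem continuous_measureReal_inter_Ioo_add {A : Set ℝ} (hA : MeasurableSet A) {ℓ : ℝ}
    (hℓ : 0 ≤ ℓ) : Continuous fun θ => volume.real (A ∩ Ioo θ (θ + ℓ)) := by
  have hint : ∀ a b, IntervalIntegrable (A.indicator (1 : ℝ → ℝ)) volume a b := fun a b =>
    intervalIntegrable_iff.2
      ((integrableOn_const (C := (1 : ℝ)) measure_Ioc_lt_top.ne).indicator hA)
  have hF := intervalIntegral.continuous_primitive hint 0
  refine ((hF.comp (continuous_add_const ℓ)).sub hF).congr fun θ => ?_
  rw [Pi.sub_apply, Function.comp_apply,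
    intervalIntegral.integral_interval_sub_left (hint _ _) (hint _ _),
    measureReal_inter_Ioo_eq_intervalIntegral hA (by linarith)]

/-- Example 1: for the uniform location model `P(A|θ) = Leb(A ∩ (θ, θ+1))` with prior
`ν = Leb`, the sets `A` and `C` of Theorem 4 do not exist (hence every version of Eaton's
chain is `ν`-irreducible). -/
theorem stmt_14 :
    ¬ ∃ (C A : Set ℝ), MeasurableSet C ∧ C.Nonempty ∧ 0 < volume Cᶜ ∧
      MeasurableSet A ∧
      (∀ θ ∈ C, volume (Aᶜ ∩ Set.Ioo θ (θ + 1)) = 0) ∧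
      (∀ᵐ θ ∂(volume : Measure ℝ), θ ∈ Cᶜ → volume (A ∩ Set.Ioo θ (θ + 1)) = 0) := by
  rintro ⟨C, A, hC, ⟨θ₀, hθ₀⟩, hCc, hA, hfull, hnull⟩
  set g : ℝ → ℝ := fun θ => volume.real (A ∩ Ioo θ (θ + 1))
  have hg : Continuous g := continuous_measureReal_inter_Ioo_add hA zero_le_one
  have hg_C : ∀ θ ∈ C, g θ = 1 := fun θ hθ => by
    have hAc : volume (Ioo θ (θ + 1) \ A) = 0 := by rw [sdiff_eq, inter_comm]; exact hfull θ hθ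
    simp only [g, measureReal_def, inter_comm A, measure_inter_conull' hAc, Real.volume_Ioo,
      add_sub_cancel_left, ENNReal.ofReal_one, ENNReal.toReal_one]
  have hg_Cc : ∀ᵐ θ, θ ∈ Cᶜ → g θ = 0 := by
    filter_upwards [hnull] with θ hθ hθC
    simp only [g, measureReal_def, hθ hθC, ENNReal.toReal_zero]
  obtain ⟨θ₁, -, hθ₁⟩ :=
    Measure.exists_mem_of_measure_ne_zero_of_ae hCc.ne' ((ae_restrict_iff' hC.compl).2 hg_Cc)
  have hU_pos : 0 < volume (g ⁻¹' Ioo 0 1) := by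
    obtain ⟨θ, hθ⟩ := intermediate_value_univ θ₁ θ₀ hg (by rw [hθ₁, hg_C θ₀ hθ₀]; norm_num :
      (1 / 2 : ℝ) ∈ Icc (g θ₁) (g θ₀))
    refine (isOpen_Ioo.preimage hg).measure_pos volume ⟨θ, ?_⟩
    rw [mem_preimage, hθ]
    norm_num
  have hU_null : volume (g ⁻¹' Ioo 0 1) = 0 := by
    refine measure_eq_zero_iff_ae_notMem.2 ?_
    filter_upwards [hg_Cc] with θ hθ ⟨hpos, hlt⟩
    by_cases hθC : θ ∈ C
    · exact hlt.ne (hg_C θ hθC)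
    · exact hpos.ne' (hθ hθC)
  exact hU_pos.ne' hU_null
end
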